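/- arXiv:2005.14466 — 7 statements merged into one kernel-verified Lean document; each statement's English description precedes it below -/
import Mathlib

section
/- For every positive integer n, the finite sum \(\sum_{k=0}^{n-1} \frac{(4k-1)^3}{256^k (2k-1)^4} \binom{2k}{k}^4\) equals \(\frac{16 n^4 (8n^2 - 12n + 3) \binom{2n}{n}^4}{256^n (2n-1)^4}\). -/
/-! The right-hand side `F n` telescopes. Since `(n + 1) C(n + 1) = 2 (2n + 1) C(n)` for the
central binomial coefficients, `F (n + 1) = (8n² + 4n - 1) C(n)⁴ / 256ⁿ`, and then
`F (n + 1) - F n` is the `n`-th summand because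
`(8n² + 4n - 1)(2n - 1)⁴ - 16n⁴(8n² - 12n + 3) = (4n - 1)³`. As `F 0 = 0`, summing gives the
claim. -/

open Finset

namespace CentralBinomFourthPowerSum

def summand (k : ℕ) : ℚ :=
  (4 * (k : ℚ) - 1) ^ 3 / (256 ^ k * (2 * (k : ℚ) - 1) ^ 4) * (Nat.centralBinom k : ℚ) ^ 4

def closedForm (n : ℕ) : ℚ :=
  16 * (n : ℚ) ^ 4 * (8 * (n : ℚ) ^ 2 - 12 * (n : ℚ) + 3) * (Nat.centralBinom n : ℚ) ^ 4
    / (256 ^ n * (2 * (n : ℚ) - 1) ^ 4)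

lemma two_mul_cast_sub_one_ne_zero (k : ℕ) : 2 * (k : ℚ) - 1 ≠ 0 := by
  intro h
  have : (2 * k : ℤ) = 1 := by exact_mod_cast sub_eq_zero.mp h
  omega

lemma centralBinom_succ_eq (n : ℕ) :
    (Nat.centralBinom (n + 1) : ℚ) = 2 * (2 * n + 1) / (n + 1) * Nat.centralBinom n := by
  rw [div_mul_eq_mul_div, eq_div_iff (by positivity), mul_comm]
  exact_mod_cast Nat.succ_mul_centralBinom_succ n

lemma closedForm_succ (n : ℕ) :
    closedForm (n + 1) = (8 * n ^ 2 + 4 * n - 1) * (Nat.centralBinom n : ℚ) ^ 4 / 256 ^ n := by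
  have : (n : ℚ) + 1 ≠ 0 := by positivity
  have : 2 * (n : ℚ) + 1 ≠ 0 := by positivity
  rw [closedForm, centralBinom_succ_eq, pow_succ, Nat.cast_succ,
    show 2 * ((n : ℚ) + 1) - 1 = 2 * n + 1 by ring]
  field_simp
  ring

lemma closedForm_succ_sub (n : ℕ) : closedForm (n + 1) - closedForm n = summand n := by
  have := two_mul_cast_sub_one_ne_zero n
  rw [closedForm_succ, closedForm, summand, div_mul_eq_mul_div,
    div_sub_div _ _ (by positivity) (by positivity), div_eq_div_iff (by positivity) (by positivity)]
  ring

lemma sum_range_summand (n : ℕ) : ∑ k ∈ range n, summand k = closedForm n := by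
  rw [← funext closedForm_succ_sub, sum_range_sub closedForm]
  simp [closedForm]

end CentralBinomFourthPowerSum

open CentralBinomFourthPowerSum in
theorem stmt_0_general (n : ℕ) :
    ∑ k ∈ Finset.range n,
      (4 * (k : ℚ) - 1) ^ 3 / (256 ^ k * (2 * (k : ℚ) - 1) ^ 4) * (Nat.choose (2 * k) k : ℚ) ^ 4
    = 16 * (n : ℚ) ^ 4 * (8 * (n : ℚ) ^ 2 - 12 * (n : ℚ) + 3) * (Nat.choose (2 * n) n : ℚ) ^ 4
        / (256 ^ n * (2 * (n : ℚ) - 1) ^ 4) := by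
  simpa only [summand, closedForm, Nat.centralBinom_eq_two_mul_choose] using sum_range_summand n

theorem stmt_0 (n : ℕ) (hn : 0 < n) :
    ∑ k ∈ Finset.range n,
      (4 * (k : ℚ) - 1) ^ 3 / (256 ^ k * (2 * (k : ℚ) - 1) ^ 4) * (Nat.choose (2 * k) k : ℚ) ^ 4
    = 16 * (n : ℚ) ^ 4 * (8 * (n : ℚ) ^ 2 - 12 * (n : ℚ) + 3) * (Nat.choose (2 * n) n : ℚ) ^ 4
        / (256 ^ n * (2 * (n : ℚ) - 1) ^ 4) :=
  stmt_0_general n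
end

section
/- Let q be an indeterminate (or a nonzero element of a field with suitable nonvanishing assumptions) and n a positive integer. Then \(\sum_{k=0}^{n-1} [4k-1]_{q^2} [4k-1]_q^2 \frac{(q^{-2};q^4)_k^4}{(q^4;q^4)_k^4} q^{4k} = (q^{2n}+1)^4 [n]_{q^2}^4 \frac{(q^{-2};q^4)_n^4}{(q^4;q^4)_n^4} \Big( 2\cdot\frac{q^5 + q^{4n+1}(q^{4n-2} - q^2 - 1)}{(q^2-1)^2} - q^{4n} \Big)\). -/
/-!
The sum telescopes. Write `u = q^{4n}` and `r_n = (q^{-2};q^4)_n / (q^4;q^4)_n`, so that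
`(q^{2n}+1)[n]_{q^2} = (1-u)/(1-q^2)` and `r_{n+1} = r_n (1 - u/q^2)/(1 - u q^4)`. The factor
`1 - u q^4` then cancels from the next partial sum, and the step from `n` to `n + 1` becomes a
polynomial identity in `q`, `q⁻¹` and `u` (`closedFormFactor_step`).
-/

open Finset

/-- The `q`-integer `[m]_x = (1 - x^m)/(1 - x)` for `m : ℤ`. -/
noncomputable def qint (m : ℤ) (x : RatFunc ℚ) : RatFunc ℚ := (1 - x ^ m) / (1 - x)

/-- The `q`-shifted factorial `(a; x)_k = ∏_{j=0}^{k-1} (1 - a x^j)`. -/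
noncomputable def qpoch (a x : RatFunc ℚ) (k : ℕ) : RatFunc ℚ :=
  ∏ j ∈ Finset.range k, (1 - a * x ^ j)

section Field

variable {K : Type*} [Field K]

/-- The bracketed factor of the closed form, as a function of `u = q^{4n}`. -/
def closedFormFactor (q u : K) : K :=
  2 * (q ^ 5 + u * q * (u / q ^ 2 - q ^ 2 - 1)) / (q ^ 2 - 1) ^ 2 - u

theorem closedFormFactor_eq (q : K) (hq : q ≠ 0) (n : ℕ) :
    2 * (q ^ 5 + q ^ (4 * (n : ℤ) + 1) * (q ^ (4 * (n : ℤ) - 2) - q ^ 2 - 1)) / (q ^ 2 - 1) ^ 2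
      - q ^ (4 * n) = closedFormFactor q (q ^ (4 * n)) := by
  have h1 : q ^ (4 * (n : ℤ) + 1) = q ^ (4 * n) * q := by
    rw [zpow_add_one₀ hq]; norm_cast
  have h2 : q ^ (4 * (n : ℤ) - 2) = q ^ (4 * n) / q ^ 2 := by
    rw [zpow_sub₀ hq]; norm_cast
  rw [h1, h2, closedFormFactor]

theorem closedFormFactor_step (q u : K) (hq : q ≠ 0) (hq2 : q ^ 2 ≠ 1) :
    (1 - u / q ^ 2) ^ 4 * closedFormFactor q (u * q ^ 4) - (1 - u) ^ 4 * closedFormFactor q u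
      = (1 - q ^ 2) * (1 + q) ^ 2 * (1 - u ^ 2 / q ^ 2) * (1 - u / q) ^ 2 * u := by
  have hq2' : q ^ 2 - 1 ≠ 0 := sub_ne_zero.mpr hq2
  unfold closedFormFactor
  field_simp
  ring

theorem sum_eq_closedForm (q : K) (hq : q ≠ 0) (hq_root : ∀ m : ℕ, 0 < m → q ^ m ≠ 1)
    (r : ℕ → K)
    (hr : ∀ k, r (k + 1) = r k * ((1 - q ^ (4 * k) / q ^ 2) / (1 - q ^ (4 * k) * q ^ 4)))
    (n : ℕ) :
    ∑ k ∈ range n, (1 - (q ^ (4 * k)) ^ 2 / q ^ 2) / (1 - q ^ 2)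
        * ((1 - q ^ (4 * k) / q) / (1 - q)) ^ 2 * r k ^ 4 * q ^ (4 * k)
      = ((1 - q ^ (4 * n)) / (1 - q ^ 2)) ^ 4 * r n ^ 4 * closedFormFactor q (q ^ (4 * n)) := by
  apply sum_range_induction
  · simp
  · intro k _
    have hq1 : 1 - q ≠ 0 := sub_ne_zero.mpr (by simpa using (hq_root 1 one_pos).symm)
    have hq2 : q ^ 2 ≠ 1 := hq_root 2 two_pos
    have hq2' : 1 - q ^ 2 ≠ 0 := sub_ne_zero.mpr hq2.symm
    have hu : 1 - q ^ (4 * k) * q ^ 4 ≠ 0 := by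
      rw [← pow_add]; exact sub_ne_zero.mpr (hq_root _ (by omega)).symm
    have key := closedFormFactor_step q (q ^ (4 * k)) hq hq2
    rw [hr, show q ^ (4 * (k + 1)) = q ^ (4 * k) * q ^ 4 by ring]
    generalize q ^ (4 * k) = u at hu key ⊢
    linear_combination (norm := (field_simp; ring)) r k ^ 4 / (1 - q ^ 2) ^ 4 * key

end Field

theorem RatFunc.X_pow_ne_one {F : Type*} [CommRing F] [IsDomain F] {m : ℕ} (hm : 0 < m) :
    (RatFunc.X : RatFunc F) ^ m ≠ 1 := by
  rw [← RatFunc.algebraMap_X, ← map_pow, ← map_one (algebraMap (Polynomial F) (RatFunc F)),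
    (RatFunc.algebraMap_injective F).ne_iff]
  intro h
  simpa [hm.ne'] using congrArg Polynomial.natDegree h

theorem qint_natCast (n : ℕ) (x : RatFunc ℚ) : qint n x = (1 - x ^ n) / (1 - x) := by
  rw [qint, zpow_natCast]

theorem qint_four_mul_sub_one {x : RatFunc ℚ} (hx : x ≠ 0) (k : ℕ) :
    qint (4 * k - 1) x = (1 - x ^ (4 * k) / x) / (1 - x) := by
  rw [qint, zpow_sub_one₀ hx, ← div_eq_mul_inv]; norm_cast

theorem qpoch_succ (a x : RatFunc ℚ) (k : ℕ) :
    qpoch a x (k + 1) = qpoch a x k * (1 - a * x ^ k) :=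
  prod_range_succ _ _

theorem qpoch_div_qpoch_succ (a b x : RatFunc ℚ) (k : ℕ) :
    qpoch a x (k + 1) / qpoch b x (k + 1)
      = qpoch a x k / qpoch b x k * ((1 - a * x ^ k) / (1 - b * x ^ k)) := by
  rw [qpoch_succ, qpoch_succ, mul_div_mul_comm]

theorem stmt_1_general (n : ℕ) :
    ∑ k ∈ Finset.range n,
        qint (4 * (k : ℤ) - 1) (RatFunc.X ^ 2) * (qint (4 * (k : ℤ) - 1) RatFunc.X) ^ 2 *
          (qpoch (RatFunc.X ^ (-2 : ℤ)) (RatFunc.X ^ 4) k) ^ 4 /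
            (qpoch (RatFunc.X ^ 4) (RatFunc.X ^ 4) k) ^ 4 * RatFunc.X ^ (4 * k)
    = (RatFunc.X ^ (2 * n) + 1) ^ 4 * (qint (n : ℤ) (RatFunc.X ^ 2)) ^ 4 *
        (qpoch (RatFunc.X ^ (-2 : ℤ)) (RatFunc.X ^ 4) n) ^ 4 /
          (qpoch (RatFunc.X ^ 4) (RatFunc.X ^ 4) n) ^ 4 *
        (2 * (RatFunc.X ^ 5 + RatFunc.X ^ (4 * (n : ℤ) + 1) *
              (RatFunc.X ^ (4 * (n : ℤ) - 2) - RatFunc.X ^ 2 - 1)) /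
            ((RatFunc.X ^ 2 - 1) ^ 2) - RatFunc.X ^ (4 * n)) := by
  set X : RatFunc ℚ := RatFunc.X
  have hX : X ≠ 0 := RatFunc.X_ne_zero
  set r : ℕ → RatFunc ℚ := fun k => qpoch (X ^ (-2 : ℤ)) (X ^ 4) k / qpoch (X ^ 4) (X ^ 4) k
  have hr : ∀ k, r (k + 1) = r k * ((1 - X ^ (4 * k) / X ^ 2) / (1 - X ^ (4 * k) * X ^ 4)) := by
    intro k
    simp only [r, qpoch_div_qpoch_succ, zpow_neg, zpow_ofNat]
    ring
  calc _ = ∑ k ∈ range n, (1 - (X ^ (4 * k)) ^ 2 / X ^ 2) / (1 - X ^ 2)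
          * ((1 - X ^ (4 * k) / X) / (1 - X)) ^ 2 * r k ^ 4 * X ^ (4 * k) := by
        refine sum_congr rfl fun k _ => ?_
        rw [qint_four_mul_sub_one (pow_ne_zero 2 hX), qint_four_mul_sub_one hX, mul_div_assoc,
          ← div_pow, pow_right_comm]
    _ = ((1 - X ^ (4 * n)) / (1 - X ^ 2)) ^ 4 * r n ^ 4 * closedFormFactor X (X ^ (4 * n)) :=
        sum_eq_closedForm X hX (fun _ => RatFunc.X_pow_ne_one) r hr n
    _ = _ := by
        rw [← closedFormFactor_eq X hX, qint_natCast]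
        simp only [r, div_pow]
        ring

theorem stmt_1 (n : ℕ) (hn : 0 < n) :
    ∑ k ∈ Finset.range n,
        qint (4 * (k : ℤ) - 1) (RatFunc.X ^ 2) * (qint (4 * (k : ℤ) - 1) RatFunc.X) ^ 2 *
          (qpoch (RatFunc.X ^ (-2 : ℤ)) (RatFunc.X ^ 4) k) ^ 4 /
            (qpoch (RatFunc.X ^ 4) (RatFunc.X ^ 4) k) ^ 4 * RatFunc.X ^ (4 * k)
    = (RatFunc.X ^ (2 * n) + 1) ^ 4 * (qint (n : ℤ) (RatFunc.X ^ 2)) ^ 4 *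
        (qpoch (RatFunc.X ^ (-2 : ℤ)) (RatFunc.X ^ 4) n) ^ 4 /
          (qpoch (RatFunc.X ^ 4) (RatFunc.X ^ 4) n) ^ 4 *
        (2 * (RatFunc.X ^ 5 + RatFunc.X ^ (4 * (n : ℤ) + 1) *
              (RatFunc.X ^ (4 * (n : ℤ) - 2) - RatFunc.X ^ 2 - 1)) /
            ((RatFunc.X ^ 2 - 1) ^ 2) - RatFunc.X ^ (4 * n)) :=
  stmt_1_general n
end

section
/- Let p be an odd prime and r a positive integer. Then \(\sum_{k=0}^{(p^r+1)/2} \frac{(4k-1)^3}{256^k (2k-1)^4} \binom{2k}{k}^4 \equiv 3 p^{4r} \pmod{p^{4r+1}}\), where the sum is a rational number whose denominator is coprime to p. -/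
/-!
The summand telescopes: the partial sums are `(8n² + 4n - 1) C(2n, n)⁴ / 256ⁿ`. For
`N = p ^ r = 2t + 1` and `n = t + 1`, the identity `(t + 1) C(2t + 2, t + 1) = 2N C(2t, t)`
extracts the factor `N⁴`, and the remaining quotient is `3` modulo `p`, because
`C(N - 1, t) ≡ (-1) ^ t` (the inner binomial coefficients of `N` vanish mod `p`) and `2 ^ N ≡ 2`.
-/

theorem sum_range_succ_eq_closed_form (n : ℕ) :
    ∑ k ∈ Finset.range (n + 1),
        (4 * (k : ℚ) - 1) ^ 3 / (256 ^ k * (2 * (k : ℚ) - 1) ^ 4) *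
          (Nat.choose (2 * k) k : ℚ) ^ 4
      = (8 * (n : ℚ) ^ 2 + 4 * n - 1) * (Nat.choose (2 * n) n : ℚ) ^ 4 / 256 ^ n := by
  induction n with
  | zero => norm_num
  | succ n ih =>
    have hrec : ((n : ℚ) + 1) * (Nat.choose (2 * (n + 1)) (n + 1) : ℚ)
        = 2 * (2 * n + 1) * (Nat.choose (2 * n) n : ℚ) := by
      exact_mod_cast Nat.succ_mul_centralBinom_succ n
    have hchoose : (Nat.choose (2 * (n + 1)) (n + 1) : ℚ)
        = 2 * (2 * n + 1) * (Nat.choose (2 * n) n : ℚ) / (n + 1) := by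
      rw [eq_div_iff (by positivity)]
      linear_combination hrec
    rw [Finset.sum_range_succ, ih, hchoose]
    push_cast
    rw [show 2 * ((n : ℚ) + 1) - 1 = 2 * n + 1 by ring]
    field_simp
    ring

theorem sum_range_sub_three_mul_pow_four {N t : ℕ} (hN : N = 2 * t + 1) :
    ∑ k ∈ Finset.range (t + 2),
        (4 * (k : ℚ) - 1) ^ 3 / (256 ^ k * (2 * (k : ℚ) - 1) ^ 4) *
          (Nat.choose (2 * k) k : ℚ) ^ 4
      - 3 * N ^ 4
      = N ^ 4 * ((16 * (2 * N ^ 2 + 6 * N + 3) * (Nat.choose (2 * t) t) ^ 4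
          - 3 * (t + 1) ^ 4 * 256 ^ (t + 1) : ℤ) : ℚ) /
        ((t + 1) ^ 4 * 256 ^ (t + 1) : ℤ) := by
  have hrec : ((t : ℚ) + 1) * (Nat.choose (2 * (t + 1)) (t + 1) : ℚ)
      = 2 * N * (Nat.choose (2 * t) t : ℚ) := by
    rw [hN]; exact_mod_cast Nat.succ_mul_centralBinom_succ t
  have hchoose : (Nat.choose (2 * (t + 1)) (t + 1) : ℚ)
      = 2 * N * (Nat.choose (2 * t) t : ℚ) / (t + 1) := by
    rw [eq_div_iff (by positivity)]
    linear_combination hrec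
  rw [sum_range_succ_eq_closed_form, hchoose]
  have hNt : (N : ℚ) = 2 * t + 1 := by exact_mod_cast hN
  push_cast
  rw [hNt]
  field_simp
  ring

theorem ZMod.natCast_choose_prime_pow_sub_one {p : ℕ} [Fact p.Prime] {n k : ℕ}
    (hk : k < p ^ n) :
    ((p ^ n - 1).choose k : ZMod p) = (-1) ^ k := by
  induction k with
  | zero => simp
  | succ k ih =>
    have hpascal := Nat.choose_succ_succ' (p ^ n - 1) k
    rw [Nat.sub_add_cancel (Nat.one_le_pow _ _ (Fact.out : p.Prime).pos)] at hpascal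
    have hdvd := (Fact.out : p.Prime).dvd_choose_pow (n := n) k.succ_ne_zero hk.ne
    rw [← ZMod.natCast_eq_zero_iff, hpascal, Nat.cast_add, ih (by omega)] at hdvd
    rw [pow_succ]
    linear_combination hdvd

section OddPrimePower

variable {p : ℕ} [Fact p.Prime] {r t : ℕ}

theorem cast_succ_pow_four_mul_pow_succ_eq_sixteen (hr : r ≠ 0) (ht : p ^ r = 2 * t + 1) :
    (t + 1 : ZMod p) ^ 4 * 256 ^ (t + 1) = 16 := by
  have htwo : 2 * (t + 1 : ZMod p) = 1 := by
    have := congrArg (Nat.cast : ℕ → ZMod p) ht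
    push_cast [ZMod.natCast_self, zero_pow hr] at this
    linear_combination -this
  have hfermat : (2 : ZMod p) ^ (2 * t + 1) = 2 := by
    rw [← ht]; exact ZMod.pow_card_pow 2
  calc (t + 1 : ZMod p) ^ 4 * 256 ^ (t + 1)
      = (2 * (t + 1 : ZMod p)) ^ 4 * ((2 : ZMod p) ^ (2 * t + 1)) ^ 4 := by
        rw [show (256 : ZMod p) = 2 ^ 8 by norm_num, ← pow_mul, ← pow_mul]; ring
    _ = 16 := by rw [htwo, hfermat]; norm_num

theorem natCast_choose_two_mul_self_pow_four_eq_one (ht : p ^ r = 2 * t + 1) :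
    (Nat.choose (2 * t) t : ZMod p) ^ 4 = 1 := by
  have h := ZMod.natCast_choose_prime_pow_sub_one (p := p) (n := r) (k := t) (by omega)
  rw [show p ^ r - 1 = 2 * t by omega] at h
  rw [h, ← pow_mul, mul_comm, pow_mul]
  norm_num

theorem cast_numerator_eq_zero (hr : r ≠ 0) (ht : p ^ r = 2 * t + 1) :
    ((16 * (2 * (p ^ r : ℕ) ^ 2 + 6 * (p ^ r : ℕ) + 3) * (Nat.choose (2 * t) t) ^ 4
      - 3 * (t + 1) ^ 4 * 256 ^ (t + 1) : ℤ) : ZMod p) = 0 := by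
  push_cast [ZMod.natCast_self, zero_pow hr]
  linear_combination 48 * natCast_choose_two_mul_self_pow_four_eq_one ht
    - 3 * cast_succ_pow_four_mul_pow_succ_eq_sixteen hr ht

end OddPrimePower

theorem Padic.norm_pow_mul_div_le {p : ℕ} [Fact p.Prime] (m : ℕ) {a d : ℤ}
    (ha : (a : ZMod p) = 0) (hd : (d : ZMod p) ≠ 0) :
    ‖(p : ℚ_[p]) ^ m * a / d‖ ≤ (p : ℝ) ^ (-(m + 1 : ℤ)) := by
  rw [ZMod.intCast_zmod_eq_zero_iff_dvd] at ha
  rw [Ne, ZMod.intCast_zmod_eq_zero_iff_dvd] at hd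
  have hnorm_a : ‖(a : ℚ_[p])‖ ≤ (p : ℝ) ^ (-(1 : ℕ) : ℤ) :=
    (Padic.norm_int_le_pow_iff_dvd a 1).mpr (by simpa using ha)
  have hnorm_d : ‖(d : ℚ_[p])‖ = 1 :=
    le_antisymm (Padic.norm_int_le_one d) (not_lt.mp (mt Padic.norm_intCast_lt_one_iff.mp hd))
  rw [norm_div, norm_mul, hnorm_d, div_one, Padic.norm_p_pow, neg_add,
    zpow_add₀ (by simp [(Fact.out : p.Prime).ne_zero])]
  gcongr
  simpa using hnorm_a

theorem stmt_3 (p : ℕ) [Fact p.Prime] (hodd : Odd p) (r : ℕ) (hr : 0 < r) :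
    ‖((∑ k ∈ Finset.range ((p ^ r + 1) / 2 + 1),
          (4 * (k : ℚ) - 1) ^ 3 / (256 ^ k * (2 * (k : ℚ) - 1) ^ 4) *
            (Nat.choose (2 * k) k : ℚ) ^ 4 : ℚ) : ℚ_[p])
        - 3 * (p : ℚ_[p]) ^ (4 * r)‖ ≤ (p : ℝ) ^ (-(4 * (r : ℤ) + 1)) := by
  obtain ⟨t, ht⟩ := hodd.pow (n := r)
  have hden : (((t + 1) ^ 4 * 256 ^ (t + 1) : ℤ) : ZMod p) ≠ 0 := by
    have htwo : (2 : ZMod p) ≠ 0 := Ring.two_ne_zero <| by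
      rw [ZMod.ringChar_zmod_n]
      rintro rfl
      exact Nat.not_even_iff_odd.mpr hodd even_two
    push_cast
    rw [cast_succ_pow_four_mul_pow_succ_eq_sixteen hr.ne' ht]
    simpa [show (16 : ZMod p) = 2 ^ 4 by norm_num] using htwo
  have hbound := Padic.norm_pow_mul_div_le (4 * r) (cast_numerator_eq_zero hr.ne' ht) hden
  rw [show (p ^ r + 1) / 2 + 1 = t + 2 by omega, sub_eq_iff_eq_add.mp
    (sum_range_sub_three_mul_pow_four (N := p ^ r) ht)]
  push_cast at hbound ⊢
  rw [add_sub_assoc, ← pow_mul, mul_comm r 4, sub_self, add_zero]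
  exact_mod_cast hbound
end

section
/- Let p be an odd prime and r a positive integer. Then \(\sum_{k=0}^{p^r-1} \frac{(4k-1)^3}{256^k (2k-1)^4} \binom{2k}{k}^4 \equiv 3 p^{4r} \pmod{p^{4r+1}}\). -/
/-!
The summand telescopes: with `F n = 16 n⁴ (8n² - 12n + 3) C(2n,n)⁴ / ((2n - 1)⁴ 256ⁿ)` one has
`F (k + 1) - F k` equal to the `k`-th term, so the sum is `F (pʳ)`. Then
`F (pʳ) - 3 p⁴ʳ = p⁴ʳ N / D` for integers `N`, `D`. Modulo `p` we have `pʳ ≡ 0`,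
`C(2pʳ, pʳ) ≡ 2` (Lucas) and `256^(pʳ) ≡ 256` (Fermat), so `N ≡ 16·3·16 - 3·256 = 0` while
`D ≡ 256` is a unit as `p` is odd.
-/

open Finset Nat

def closedForm (n : ℕ) : ℚ :=
  16 * n ^ 4 * (8 * n ^ 2 - 12 * n + 3) * (centralBinom n : ℚ) ^ 4 / ((2 * n - 1) ^ 4 * 256 ^ n)

lemma two_mul_natCast_sub_one_ne_zero (n : ℕ) : 2 * (n : ℚ) - 1 ≠ 0 := by
  intro h
  have : (2 * n : ℚ) = 1 := by linarith
  norm_cast at this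
  omega

lemma closedForm_succ (n : ℕ) :
    closedForm (n + 1) = (8 * n ^ 2 + 4 * n - 1) * (centralBinom n : ℚ) ^ 4 / 256 ^ n := by
  have hrec :
      ((n + 1) * centralBinom (n + 1) : ℚ) ^ 4 = (2 * (2 * n + 1) * centralBinom n) ^ 4 := by
    exact_mod_cast congrArg (· ^ 4) (succ_mul_centralBinom_succ n)
  have h : 2 * ((n : ℚ) + 1) - 1 ≠ 0 := by
    rw [show 2 * ((n : ℚ) + 1) - 1 = 2 * n + 1 by ring]; positivity
  rw [closedForm, div_eq_div_iff (by push_cast; positivity) (by positivity)]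
  push_cast
  linear_combination 16 * (8 * (n : ℚ) ^ 2 + 4 * n - 1) * 256 ^ n * hrec

lemma closedForm_succ_sub (n : ℕ) :
    closedForm (n + 1) - closedForm n =
      (4 * n - 1) ^ 3 / (256 ^ n * (2 * n - 1) ^ 4) * (centralBinom n : ℚ) ^ 4 := by
  have := two_mul_natCast_sub_one_ne_zero n
  rw [closedForm_succ, closedForm, div_sub_div _ _ (by positivity) (by positivity),
    div_mul_eq_mul_div, div_eq_div_iff (by positivity) (by positivity)]
  ring

lemma sum_range_eq_closedForm (n : ℕ) :
    ∑ k ∈ range n, (4 * (k : ℚ) - 1) ^ 3 / (256 ^ k * (2 * (k : ℚ) - 1) ^ 4) *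
        ((2 * k).choose k : ℚ) ^ 4 = closedForm n := by
  simp_rw [← centralBinom_eq_two_mul_choose, ← closedForm_succ_sub, sum_range_sub]
  simp [closedForm]

def excessNum (n : ℕ) : ℤ :=
  16 * (8 * n ^ 2 - 12 * n + 3) * centralBinom n ^ 4 - 3 * (2 * n - 1) ^ 4 * 256 ^ n

def excessDen (n : ℕ) : ℤ := (2 * n - 1) ^ 4 * 256 ^ n

lemma closedForm_sub_three_mul_pow_four (n : ℕ) :
    closedForm n - 3 * n ^ 4 = n ^ 4 * ((excessNum n : ℚ) / excessDen n) := by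
  have := two_mul_natCast_sub_one_ne_zero n
  rw [closedForm, excessNum, excessDen]
  push_cast
  rw [mul_div_assoc', eq_div_iff (by positivity), sub_mul, div_mul_cancel₀ _ (by positivity)]
  ring

lemma centralBinom_prime_pow_cast_zmod (p r : ℕ) [Fact p.Prime] :
    (centralBinom (p ^ r) : ZMod p) = 2 := by
  have h := (ZMod.intCast_eq_intCast_iff _ _ _).mpr
    (Choose.choose_pow_mul_pow_mul_modEq_choose (k := r) (a := 2) (b := 1) (p := p))
  simpa [centralBinom_eq_two_mul_choose, mul_comm] using h

section

variable {p r : ℕ} [Fact p.Prime]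

lemma excessNum_prime_pow_cast_zmod (hr : r ≠ 0) : (excessNum (p ^ r) : ZMod p) = 0 := by
  rw [excessNum]
  push_cast
  rw [ZMod.natCast_self, zero_pow hr, centralBinom_prime_pow_cast_zmod, ZMod.pow_card_pow]
  norm_num

lemma excessDen_prime_pow_cast_zmod (hr : r ≠ 0) : (excessDen (p ^ r) : ZMod p) = 2 ^ 8 := by
  rw [excessDen]
  push_cast
  rw [ZMod.natCast_self, zero_pow hr, ZMod.pow_card_pow]
  norm_num

end

lemma Padic.norm_intCast_div_le_inv {p : ℕ} [Fact p.Prime] {a b : ℤ} (ha : (p : ℤ) ∣ a)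
    (hb : ¬ (p : ℤ) ∣ b) : ‖(a : ℚ_[p]) / b‖ ≤ (p : ℝ)⁻¹ := by
  have hb1 : ‖(b : ℚ_[p])‖ = 1 :=
    le_antisymm (Padic.norm_int_le_one b) (not_lt.mp (mt Padic.norm_intCast_lt_one_iff.mp hb))
  have ha1 : ‖(a : ℚ_[p])‖ ≤ (p : ℝ) ^ (-1 : ℤ) := by
    simpa using (Padic.norm_int_le_pow_iff_dvd a 1).mpr (by simpa using ha)
  rwa [norm_div, hb1, div_one, ← zpow_neg_one]

theorem stmt_4 (p : ℕ) [Fact p.Prime] (hodd : Odd p) (r : ℕ) (hr : 0 < r) :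
    ‖((∑ k ∈ Finset.range (p ^ r),
          (4 * (k : ℚ) - 1) ^ 3 / (256 ^ k * (2 * (k : ℚ) - 1) ^ 4) *
            (Nat.choose (2 * k) k : ℚ) ^ 4 : ℚ) : ℚ_[p])
        - 3 * (p : ℚ_[p]) ^ (4 * r)‖ ≤ (p : ℝ) ^ (-(4 * (r : ℤ) + 1)) := by
  have hp2 : ringChar (ZMod p) ≠ 2 := by
    rw [ZMod.ringChar_zmod_n]; exact hodd.ne_two_of_dvd_nat dvd_rfl
  have hnum : (p : ℤ) ∣ excessNum (p ^ r) :=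
    (ZMod.intCast_zmod_eq_zero_iff_dvd _ _).mp (excessNum_prime_pow_cast_zmod hr.ne')
  have hden : ¬ (p : ℤ) ∣ excessDen (p ^ r) := by
    rw [← ZMod.intCast_zmod_eq_zero_iff_dvd, excessDen_prime_pow_cast_zmod hr.ne']
    exact pow_ne_zero 8 (Ring.two_ne_zero hp2)
  rw [sum_range_eq_closedForm]
  have hsub : (closedForm (p ^ r) : ℚ_[p]) - 3 * (p : ℚ_[p]) ^ (4 * r) =
      (p : ℚ_[p]) ^ (4 * r) * ((excessNum (p ^ r) : ℚ_[p]) / excessDen (p ^ r)) := by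
    rw [← sub_add_cancel (closedForm _) (3 * ((p ^ r : ℕ) : ℚ) ^ 4),
      closedForm_sub_three_mul_pow_four]
    push_cast
    ring
  calc _ = (p : ℝ)⁻¹ ^ (4 * r) * ‖(excessNum (p ^ r) : ℚ_[p]) / excessDen (p ^ r)‖ := by
        rw [hsub, norm_mul, norm_pow, Padic.norm_p]
    _ ≤ (p : ℝ)⁻¹ ^ (4 * r) * (p : ℝ)⁻¹ := by
        gcongr; exact Padic.norm_intCast_div_le_inv hnum hden
    _ = (p : ℝ) ^ (-(4 * (r : ℤ) + 1)) := by
        rw [← pow_succ, inv_pow, ← zpow_natCast, ← zpow_neg]; push_cast; ring_nf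
end

section
/- Let n > 1 be an odd integer. Then \(\frac{(q^{-2};q^4)_{(n+1)/2}}{(q^4;q^4)_{(n+1)/2}} \equiv (-1)^{(n+1)/2} q^{(n-1)^2/2 - 2} \pmod{\Phi_n(q^2)}\), meaning that \((q^{-2};q^4)_{(n+1)/2} - (-1)^{(n+1)/2} q^{(n-1)^2/2 - 2} (q^4;q^4)_{(n+1)/2}\) is divisible by \(\Phi_n(q^2)\) in \(\mathbb{Q}[q,q^{-1}]\). -/
open Finset Polynomial

/-- `f` is a Laurent polynomial: of the form `q^{-m} g(q)` for a polynomial `g`. -/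
def IsLaurent (f : RatFunc ℚ) : Prop :=
  ∃ (g : Polynomial ℚ) (m : ℕ),
    f = algebraMap (Polynomial ℚ) (RatFunc ℚ) g * RatFunc.X ^ (-(m : ℤ))

/-!
Put `m = (n + 1) / 2`. Multiplying by `q^{2m}` turns the claim into a divisibility by
`Φ_n(q²)` in `ℚ[q]`. Modulo `Φ_n(q²)` we have `q^{2n} = 1`, hence `q^{4m} = q²`, so each factor
`q² - q^{4j}` of `q^{2m} (q⁻²; q⁴)_m` equals `-q^{4j} (1 - q^{4(m - j)})`; taking the product over
`j < m` and reversing the order of the second factors gives `(-1)^m q^{2m(m-1)} (q⁴; q⁴)_m`.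
-/

theorem prod_range_sub_pow_of_pow_eq {R : Type*} [CommRing R] {x c : R} {m : ℕ}
    (h : x ^ m = c) :
    ∏ j ∈ range m, (c - x ^ j) =
      (-1) ^ m * x ^ (∑ j ∈ range m, j) * ∏ j ∈ range m, (1 - x ^ (j + 1)) := by
  have hfactor : ∀ j ∈ range m, c - x ^ j = (-1) * x ^ j * (1 - x ^ (m - 1 - j + 1)) := by
    intro j hj
    have hsplit : x ^ m = x ^ j * x ^ (m - 1 - j + 1) := by
      rw [← pow_add]; congr 1; have := mem_range.mp hj; omega
    rw [← h, hsplit]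
    ring
  rw [prod_congr rfl hfactor, prod_mul_distrib, prod_mul_distrib, prod_const, card_range,
    prod_pow_eq_pow_sum, prod_range_reflect (fun j => 1 - x ^ (j + 1))]

theorem cyclotomic_comp_X_sq_dvd {R : Type*} [CommRing R] {n m : ℕ} (hm : n + 1 = 2 * m) :
    (cyclotomic n R).comp (X ^ 2) ∣
      ∏ j ∈ range m, (X ^ 2 - (X ^ 4) ^ j) -
        (-1) ^ m * (X ^ 4) ^ (∑ j ∈ range m, j) * ∏ j ∈ range m, (1 - (X ^ 4) ^ (j + 1)) := by
  set Φ := (cyclotomic n R).comp (X ^ 2)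
  set u := AdjoinRoot.root Φ
  have hu : (u ^ 2) ^ n = 1 := by
    have hroot : aeval (u ^ 2) (cyclotomic n R) = 0 := by
      rw [← aeval_X_pow (R := R) u, ← aeval_comp, AdjoinRoot.aeval_eq, AdjoinRoot.mk_self]
    obtain ⟨c, hc⟩ := cyclotomic.dvd_X_pow_sub_one n R
    have := congrArg (aeval (u ^ 2)) hc
    rwa [map_mul, hroot, zero_mul, map_sub, map_pow, aeval_X, map_one, sub_eq_zero] at this
  have hx : (u ^ 4) ^ m = u ^ 2 := by
    rw [← pow_mul, show 4 * m = 2 * n + 2 by omega, pow_add, pow_mul, hu, one_mul]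
  rw [← AdjoinRoot.mk_eq_zero]
  simp only [map_sub, map_mul, map_prod, map_pow, map_neg, map_one, AdjoinRoot.mk_X]
  exact sub_eq_zero.mpr (prod_range_sub_pow_of_pow_eq hx)

local notation "q" => (RatFunc.X : RatFunc ℚ)

theorem qpoch_X_zpow_neg_two (m : ℕ) :
    qpoch (q ^ (-2 : ℤ)) (q ^ 4) m =
      algebraMap ℚ[X] (RatFunc ℚ) (∏ j ∈ range m, (X ^ 2 - (X ^ 4) ^ j)) *
        q ^ (-((2 * m : ℕ) : ℤ)) := by
  have hq : q ≠ 0 := RatFunc.X_ne_zero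
  have hpow : q ^ (2 * m) = ∏ _j ∈ range m, q ^ 2 := by rw [prod_const, card_range, pow_mul]
  rw [zpow_neg q ((2 * m : ℕ) : ℤ), zpow_natCast, eq_mul_inv_iff_mul_eq₀ (pow_ne_zero _ hq),
    hpow, qpoch, ← prod_mul_distrib, map_prod]
  refine prod_congr rfl fun j _ => ?_
  simp only [map_sub, map_pow, RatFunc.algebraMap_X]
  field_simp

theorem qpoch_X_pow_four (m : ℕ) :
    qpoch (q ^ 4) (q ^ 4) m =
      algebraMap ℚ[X] (RatFunc ℚ) (∏ j ∈ range m, (1 - (X ^ 4) ^ (j + 1))) := by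
  simp only [qpoch, map_prod, map_sub, map_one, map_pow, RatFunc.algebraMap_X, ← pow_succ']

theorem aeval_X_sq_eq_algebraMap_comp (p : ℚ[X]) :
    aeval (q ^ 2) p = algebraMap ℚ[X] (RatFunc ℚ) (p.comp (X ^ 2)) := by
  rw [comp_eq_aeval, ← aeval_algebraMap_apply, map_pow, RatFunc.algebraMap_X]

theorem isLaurent_mul_X_zpow_div_of_dvd {p d : ℚ[X]} (hdvd : d ∣ p) (k : ℕ) :
    IsLaurent
      (algebraMap ℚ[X] (RatFunc ℚ) p * q ^ (-(k : ℤ)) / algebraMap ℚ[X] (RatFunc ℚ) d) := by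
  rcases eq_or_ne d 0 with rfl | hd
  · exact ⟨0, 0, by simp⟩
  obtain ⟨g, rfl⟩ := hdvd
  refine ⟨g, k, ?_⟩
  have hd' : algebraMap ℚ[X] (RatFunc ℚ) d ≠ 0 := RatFunc.algebraMap_ne_zero hd
  rw [map_mul]
  field_simp

theorem stmt_7_general (n : ℕ) (hodd : Odd n) :
    IsLaurent
      ((qpoch (RatFunc.X ^ (-2 : ℤ)) (RatFunc.X ^ 4) ((n + 1) / 2)
          - (-1) ^ ((n + 1) / 2) * RatFunc.X ^ (((n : ℤ) - 1) ^ 2 / 2 - 2) *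
              qpoch (RatFunc.X ^ 4) (RatFunc.X ^ 4) ((n + 1) / 2))
        / Polynomial.aeval ((RatFunc.X : RatFunc ℚ) ^ 2) (Polynomial.cyclotomic n ℚ)) := by
  obtain ⟨m, hm⟩ : ∃ m, n + 1 = 2 * m := by obtain ⟨t, rfl⟩ := hodd; exact ⟨t + 1, by ring⟩
  have hexp : ((n : ℤ) - 1) ^ 2 / 2 - 2 = ((4 * ∑ j ∈ range m, j : ℕ) : ℤ) - (2 * m : ℕ) := by
    have hsum : ((∑ j ∈ range m, j : ℕ) : ℤ) * 2 = m * (m - 1) := by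
      rw [← Nat.cast_ofNat, ← Nat.cast_mul, sum_range_id_mul_two, Nat.cast_mul,
        Nat.cast_sub (by omega), Nat.cast_one]
    have hn : (n : ℤ) = 2 * m - 1 := by omega
    rw [hn, show (2 * (m : ℤ) - 1 - 1) ^ 2 = 2 * (2 * (m - 1) ^ 2) by ring,
      Int.mul_ediv_cancel_left _ two_ne_zero]
    push_cast at hsum ⊢
    linear_combination -2 * hsum
  rw [show (n + 1) / 2 = m by omega, hexp, qpoch_X_zpow_neg_two, qpoch_X_pow_four,
    aeval_X_sq_eq_algebraMap_comp]
  convert isLaurent_mul_X_zpow_div_of_dvd (cyclotomic_comp_X_sq_dvd (R := ℚ) hm) (2 * m) using 2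
  have hq : q ≠ 0 := RatFunc.X_ne_zero
  simp only [zpow_sub₀ hq, zpow_neg, zpow_natCast, map_sub, map_mul, map_pow, map_neg, map_one,
    RatFunc.algebraMap_X]
  field_simp
  ring

theorem stmt_7 (n : ℕ) (hn : 1 < n) (hodd : Odd n) :
    IsLaurent
      ((qpoch (RatFunc.X ^ (-2 : ℤ)) (RatFunc.X ^ 4) ((n + 1) / 2)
          - (-1) ^ ((n + 1) / 2) * RatFunc.X ^ (((n : ℤ) - 1) ^ 2 / 2 - 2) *
              qpoch (RatFunc.X ^ 4) (RatFunc.X ^ 4) ((n + 1) / 2))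
        / Polynomial.aeval ((RatFunc.X : RatFunc ℚ) ^ 2) (Polynomial.cyclotomic n ℚ)) :=
  stmt_7_general n hodd
end

section
/- Let n > 1 be an odd integer. Then the Gaussian binomial coefficient satisfies \(\binom{2n}{n}_{q^2} \equiv 2 \pmod{\Phi_n(q^2)}\), i.e., \(\binom{2n}{n}_{q^2} - 2\) is divisible by \(\Phi_n(q^2)\) in \(\mathbb{Z}[q]\). -/
/-!
Work with the Gaussian binomial `[m, k]_Q` in the variable `Q = X` and substitute `Q = X ^ 2` only
at the end. From `[2n, n]_Q (Q;Q)_n ^ 2 = (Q;Q)_{2n}`, cancelling `(Q;Q)_n` and the factor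
`1 - Q ^ n` gives `[2n, n]_Q (Q;Q)_{n-1} = (1 + Q ^ n) ∏_{i<n-1} (1 - Q ^ (n+i+1))`. At a
primitive `n`-th root of unity `ζ` the product on the right equals `(ζ;ζ)_{n-1} ≠ 0` since
`ζ ^ n = 1`, so `[2n, n]_ζ = 2`; as `Φ_n` is the minimal polynomial of `ζ`, it divides
`[2n, n]_Q - 2`.
-/

open Finset Polynomial

/-- `(Q; Q)_m = ∏_{j=1}^{m} (1 - Q^j)` with `Q = X^2`, in `ℤ[X]`. -/
noncomputable def pp (m : ℕ) : Polynomial ℤ :=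
  ∏ j ∈ Finset.range m, (1 - (X : Polynomial ℤ) ^ (2 * (j + 1)))

noncomputable def qBinomial : ℕ → ℕ → ℤ[X]
  | _, 0 => 1
  | 0, _ + 1 => 0
  | m + 1, k + 1 => qBinomial m k + X ^ (k + 1) * qBinomial m (k + 1)

noncomputable def qPochhammer (m : ℕ) : ℤ[X] :=
  ∏ j ∈ range m, (1 - X ^ (j + 1))

lemma qBinomial_eq_zero_of_lt {m k : ℕ} (h : m < k) : qBinomial m k = 0 := by
  induction m generalizing k with
  | zero => obtain ⟨k, rfl⟩ := Nat.exists_eq_succ_of_ne_zero h.ne'; rfl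
  | succ m ih =>
    obtain ⟨k, rfl⟩ := Nat.exists_eq_succ_of_ne_zero (by omega : k ≠ 0)
    simp only [qBinomial, ih (by omega : m < k), ih (by omega : m < k + 1), mul_zero, add_zero]

lemma qBinomial_self (m : ℕ) : qBinomial m m = 1 := by
  induction m with
  | zero => rfl
  | succ m ih =>
    simp only [qBinomial, ih, qBinomial_eq_zero_of_lt m.lt_succ_self, mul_zero, add_zero]

lemma qPochhammer_succ (m : ℕ) : qPochhammer (m + 1) = qPochhammer m * (1 - X ^ (m + 1)) :=
  prod_range_succ _ m

lemma one_sub_X_pow_ne_zero {k : ℕ} (hk : k ≠ 0) : (1 - X ^ k : ℤ[X]) ≠ 0 := by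
  intro h
  simpa [zero_pow hk] using congrArg (eval 0) h

lemma qPochhammer_ne_zero (m : ℕ) : qPochhammer m ≠ 0 :=
  prod_ne_zero_iff.mpr fun j _ ↦ one_sub_X_pow_ne_zero j.succ_ne_zero

lemma qBinomial_add_mul_qPochhammer_mul (k j : ℕ) :
    qBinomial (k + j) k * (qPochhammer k * qPochhammer j) = qPochhammer (k + j) := by
  induction h : k + j generalizing k j with
  | zero =>
    obtain ⟨rfl, rfl⟩ : k = 0 ∧ j = 0 := by omega
    simp [qBinomial, qPochhammer]
  | succ m ih =>
    rcases k with _ | k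
    · obtain rfl : j = m + 1 := by omega
      simp [qBinomial, qPochhammer]
    rcases j with _ | j
    · obtain rfl : k = m := by omega
      simp [qBinomial_self, qPochhammer]
    have h₁ := ih k (j + 1) (by omega)
    have h₂ := ih (k + 1) j (by omega)
    have hX : (X : ℤ[X]) ^ (k + 1) * X ^ (j + 1) = X ^ (m + 1) := by rw [← pow_add, h]
    rw [qBinomial, qPochhammer_succ m, qPochhammer_succ k, qPochhammer_succ j]
    rw [qPochhammer_succ] at h₁ h₂
    linear_combination (1 - (X : ℤ[X]) ^ (k + 1)) * h₁ +
      X ^ (k + 1) * (1 - X ^ (j + 1)) * h₂ - qPochhammer m * hX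

lemma qPochhammer_add (k j : ℕ) :
    qPochhammer (k + j) = qPochhammer k * ∏ i ∈ range j, (1 - X ^ (k + i + 1)) :=
  prod_range_add _ k j

lemma qBinomial_add_mul_qPochhammer (k j : ℕ) :
    qBinomial (k + j) k * qPochhammer j = ∏ i ∈ range j, (1 - X ^ (k + i + 1)) := by
  refine mul_left_cancel₀ (qPochhammer_ne_zero k) ?_
  rw [← qPochhammer_add, ← qBinomial_add_mul_qPochhammer_mul]
  ring

lemma qBinomial_two_mul_mul_qPochhammer (m : ℕ) :
    qBinomial (2 * (m + 1)) (m + 1) * qPochhammer m =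
      (1 + X ^ (m + 1)) * ∏ i ∈ range m, (1 - X ^ (m + 1 + i + 1)) := by
  refine mul_right_cancel₀ (one_sub_X_pow_ne_zero (k := m + 1) (by omega)) ?_
  have h := qBinomial_add_mul_qPochhammer (m + 1) (m + 1)
  rw [qPochhammer_succ, prod_range_succ, ← two_mul] at h
  have hX : (X : ℤ[X]) ^ (m + 1 + m + 1) = X ^ (m + 1) * X ^ (m + 1) := by ring
  linear_combination h - (∏ i ∈ range m, (1 - X ^ (m + 1 + i + 1)) : ℤ[X]) * hX

lemma aeval_qBinomial_two_mul {R : Type*} [CommRing R] [IsDomain R] {ζ : R} {n : ℕ}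
    (hζ : IsPrimitiveRoot ζ n) (hn : n ≠ 0) : aeval ζ (qBinomial (2 * n) n) = 2 := by
  obtain ⟨m, rfl⟩ := Nat.exists_eq_succ_of_ne_zero hn
  have h := congrArg (aeval ζ) (qBinomial_two_mul_mul_qPochhammer m)
  have hroot : ζ ^ (m + 1) = 1 := hζ.pow_eq_one
  have hne : aeval ζ (qPochhammer m) ≠ 0 := by
    simp only [qPochhammer, map_prod, map_sub, map_one, map_pow, aeval_X]
    refine prod_ne_zero_iff.mpr fun i hi ↦ sub_ne_zero.mpr (Ne.symm ?_)
    exact hζ.pow_ne_one_of_pos_of_lt i.succ_ne_zero (by simpa using hi)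
  refine mul_right_cancel₀ hne ?_
  simp only [qPochhammer, map_prod, map_mul, map_add, map_sub, map_one, map_pow, aeval_X] at h ⊢
  have hshift (i : ℕ) : ζ ^ (m + 1 + i + 1) = ζ ^ (i + 1) := by
    rw [add_assoc, pow_add, hroot, one_mul]
  simp only [h, hshift, hroot, one_add_one_eq_two]

lemma cyclotomic_dvd_qBinomial_two_mul_sub_two (n : ℕ) :
    cyclotomic n ℤ ∣ qBinomial (2 * n) n - 2 := by
  rcases Nat.eq_zero_or_pos n with rfl | hn
  · simp
  have hζ := Complex.isPrimitiveRoot_exp n hn.ne'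
  rw [cyclotomic_eq_minpoly hζ hn]
  refine minpoly.isIntegrallyClosed_dvd (hζ.isIntegral hn) ?_
  rw [map_sub, aeval_qBinomial_two_mul hζ hn.ne', map_ofNat, sub_self]

lemma pp_eq_comp (m : ℕ) : pp m = (qPochhammer m).comp (X ^ 2) := by
  simp only [pp, qPochhammer, Polynomial.prod_comp, sub_comp, one_comp, X_pow_comp, ← pow_mul]

theorem stmt_8_general (n : ℕ) :
    ∃ B : Polynomial ℤ,
      B * (pp n) ^ 2 = pp (2 * n) ∧
        (Polynomial.cyclotomic n ℤ).comp ((X : Polynomial ℤ) ^ 2) ∣ B - 2 := by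
  refine ⟨(qBinomial (2 * n) n).comp (X ^ 2), ?_, ?_⟩
  · rw [pp_eq_comp, pp_eq_comp, ← pow_comp, ← mul_comp, sq, two_mul,
      qBinomial_add_mul_qPochhammer_mul]
  · simpa only [map_sub, map_ofNat, coe_compRingHom_apply] using map_dvd (compRingHom (X ^ 2))
      (cyclotomic_dvd_qBinomial_two_mul_sub_two n)

theorem stmt_8 (n : ℕ) (hn : 1 < n) (hodd : Odd n) :
    ∃ B : Polynomial ℤ,
      B * (pp n) ^ 2 = pp (2 * n) ∧
        (Polynomial.cyclotomic n ℤ).comp ((X : Polynomial ℤ) ^ 2) ∣ B - 2 :=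
  stmt_8_general n
end

section
/- Let n > 1 be an odd integer and let \(\zeta\) be a primitive n-th root of unity in \(\mathbb{C}\). Then \(\sum_{k=0}^{(n+1)/2} [4k-1]_{\zeta} [4k-1]_{\omega}^2 \frac{(\omega^{-2};\omega^4)_k^4}{(\omega^4;\omega^4)_k^4} \omega^{4k} = 0\) for any \(\omega\) with \(\omega^2 = \zeta\), i.e., the truncated sum \(\sum_{k=0}^{(n+1)/2} [4k-1]_{q^2}[4k-1]_q^2 \frac{(q^{-2};q^4)_k^4}{(q^4;q^4)_k^4} q^{4k}\) vanishes whenever \(q^2\) is a primitive n-th root of unity. -/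
/-!
The partial sums have a closed form: with `a = q^(4m)`,
`∑_{k ≤ m} summand q k = (q⁻²; q⁴)_m⁴ · partialSumPoly a q / (q⁴ (1 - q²)⁶ (q⁴; q⁴)_m⁴)`
for an explicit polynomial `partialSumPoly` divisible by `a - q²`, as one checks by telescoping.
If `q²` is a primitive `n`-th root of unity with `n` odd and `m = (n + 1)/2`, then
`q^(4m) = q^(2n+2) = q²`, so the numerator vanishes, while `(q⁴; q⁴)_m ≠ 0` because `q⁴` is again a
primitive `n`-th root of unity and `m < n`.
-/

open Finset

/-- The `q`-integer `[m]_x = (1 - x^m)/(1 - x)` in `ℂ`. -/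
noncomputable def qintC (m : ℤ) (x : ℂ) : ℂ := (1 - x ^ m) / (1 - x)

/-- The `q`-shifted factorial `(a; x)_k = ∏_{j=0}^{k-1} (1 - a x^j)` in `ℂ`. -/
noncomputable def qpochC (a x : ℂ) (k : ℕ) : ℂ :=
  ∏ j ∈ Finset.range k, (1 - a * x ^ j)

lemma qpochC_succ (a x : ℂ) (k : ℕ) : qpochC a x (k + 1) = qpochC a x k * (1 - a * x ^ k) :=
  prod_range_succ _ _

lemma IsPrimitiveRoot.qpochC_self_ne_zero {x : ℂ} {n m : ℕ} (hx : IsPrimitiveRoot x n)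
    (hm : m < n) : qpochC x x m ≠ 0 := by
  refine prod_ne_zero_iff.2 fun j hj h ↦ ?_
  rw [← pow_succ'] at h
  exact hx.pow_ne_one_of_pos_of_lt j.succ_ne_zero ((mem_range.1 hj).succ_le.trans_lt hm)
    (sub_eq_zero.1 h).symm

noncomputable def summand (x : ℂ) (k : ℕ) : ℂ :=
  qintC (4 * (k : ℤ) - 1) (x ^ 2) * qintC (4 * (k : ℤ) - 1) x ^ 2 *
    qpochC (x ^ (-2 : ℤ)) (x ^ 4) k ^ 4 / qpochC (x ^ 4) (x ^ 4) k ^ 4 * x ^ (4 * k)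

lemma qpochC_zpow_neg_two_succ {x : ℂ} (hx : x ≠ 0) (m : ℕ) :
    qpochC (x ^ (-2 : ℤ)) (x ^ 4) (m + 1) =
      qpochC (x ^ (-2 : ℤ)) (x ^ 4) m * ((x ^ 2 - x ^ (4 * m)) / x ^ 2) := by
  rw [qpochC_succ, zpow_neg, zpow_ofNat, ← pow_mul]
  field_simp

lemma qpochC_pow_four_succ (x : ℂ) (m : ℕ) :
    qpochC (x ^ 4) (x ^ 4) (m + 1) = qpochC (x ^ 4) (x ^ 4) m * (1 - x ^ 4 * x ^ (4 * m)) := by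
  rw [qpochC_succ, ← pow_mul]

lemma summand_succ (x : ℂ) (m : ℕ) :
    summand x (m + 1) =
      (1 - (x ^ (4 * m)) ^ 2 * x ^ 6) / (1 - x ^ 2) * ((1 - x ^ (4 * m) * x ^ 3) / (1 - x)) ^ 2 *
        qpochC (x ^ (-2 : ℤ)) (x ^ 4) (m + 1) ^ 4 / qpochC (x ^ 4) (x ^ 4) (m + 1) ^ 4 *
          (x ^ (4 * m) * x ^ 4) := by
  have hexp : (4 * ((m + 1 : ℕ) : ℤ) - 1) = ((4 * m + 3 : ℕ) : ℤ) := by push_cast; ring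
  simp only [summand, qintC, hexp, zpow_natCast]
  ring

noncomputable def partialSumPoly (a x : ℂ) : ℂ :=
  (a - x ^ 2) *
    (2 * x ^ 3 * a ^ 5
      - (1 + 2 * x - 2 * x ^ 2 + 2 * x ^ 3 + x ^ 4 + 6 * x ^ 5) * a ^ 4
      + (2 * x + 3 * x ^ 2 + 6 * x ^ 3 - 6 * x ^ 4 + 6 * x ^ 5 + 3 * x ^ 6 + 6 * x ^ 7) * a ^ 3
      - (6 * x ^ 3 + 3 * x ^ 4 + 6 * x ^ 5 - 6 * x ^ 6 + 6 * x ^ 7 + 3 * x ^ 8 + 2 * x ^ 9) * a ^ 2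
      + (6 * x ^ 5 + x ^ 6 + 2 * x ^ 7 - 2 * x ^ 8 + 2 * x ^ 9 + x ^ 10) * a
      - 2 * x ^ 7)

lemma partialSumPoly_step (a x : ℂ) :
    x ^ 8 * (1 - x ^ 4 * a) ^ 4 * partialSumPoly a x
      + (1 - a ^ 2 * x ^ 6) * (1 - a * x ^ 3) ^ 2 * (x ^ 2 - a) ^ 4 * a * x ^ 8
          * (1 - x) ^ 3 * (1 + x) ^ 5
      = (x ^ 2 - a) ^ 4 * partialSumPoly (x ^ 4 * a) x := by
  unfold partialSumPoly; ring

lemma partialSumPoly_div_add {x a P Q : ℂ} (hx : x ≠ 0) (h1x : 1 - x ≠ 0) (h1x2 : 1 - x ^ 2 ≠ 0)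
    (hQ : Q ≠ 0) (hf : 1 - x ^ 4 * a ≠ 0) :
    P ^ 4 * partialSumPoly a x / (x ^ 4 * (1 - x ^ 2) ^ 6 * Q ^ 4)
      + (1 - a ^ 2 * x ^ 6) / (1 - x ^ 2) * ((1 - a * x ^ 3) / (1 - x)) ^ 2 *
        (P * ((x ^ 2 - a) / x ^ 2)) ^ 4 / (Q * (1 - x ^ 4 * a)) ^ 4 * (a * x ^ 4)
      = (P * ((x ^ 2 - a) / x ^ 2)) ^ 4 * partialSumPoly (x ^ 4 * a) x /
          (x ^ 4 * (1 - x ^ 2) ^ 6 * (Q * (1 - x ^ 4 * a)) ^ 4) := by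
  field_simp
  linear_combination P ^ 4 * (1 - x) ^ 2 * partialSumPoly_step a x

lemma sum_range_summand (x : ℂ) (hx : x ≠ 0) (hx2 : x ^ 2 ≠ 1) (m : ℕ)
    (hQ : qpochC (x ^ 4) (x ^ 4) m ≠ 0) :
    ∑ k ∈ range (m + 1), summand x k =
      qpochC (x ^ (-2 : ℤ)) (x ^ 4) m ^ 4 * partialSumPoly (x ^ (4 * m)) x /
        (x ^ 4 * (1 - x ^ 2) ^ 6 * qpochC (x ^ 4) (x ^ 4) m ^ 4) := by
  have h1x2 : 1 - x ^ 2 ≠ 0 := sub_ne_zero.2 hx2.symm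
  have h1x : 1 - x ≠ 0 := fun h ↦ hx2 (by rw [← sub_eq_zero.1 h]; ring)
  induction m with
  | zero =>
    simp only [zero_add, sum_range_one, summand, qpochC, range_zero, prod_empty, qintC,
      Nat.cast_zero, mul_zero, zero_sub, zpow_neg_one]
    unfold partialSumPoly
    field_simp
    ring
  | succ m ih =>
    rw [qpochC_pow_four_succ, mul_ne_zero_iff] at hQ
    rw [sum_range_succ, ih hQ.1, summand_succ, qpochC_zpow_neg_two_succ hx, qpochC_pow_four_succ,
      show 4 * (m + 1) = 4 + 4 * m by ring, pow_add]
    exact partialSumPoly_div_add hx h1x h1x2 hQ.1 hQ.2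

theorem stmt_15 (n : ℕ) (hn : 1 < n) (hodd : Odd n) (ω : ℂ)
    (hω : IsPrimitiveRoot (ω ^ 2) n) :
    ∑ k ∈ Finset.range ((n + 1) / 2 + 1),
        qintC (4 * (k : ℤ) - 1) (ω ^ 2) * (qintC (4 * (k : ℤ) - 1) ω) ^ 2 *
          (qpochC (ω ^ (-2 : ℤ)) (ω ^ 4) k) ^ 4 / (qpochC (ω ^ 4) (ω ^ 4) k) ^ 4 *
            ω ^ (4 * k) = 0 := by
  have hω0 : ω ≠ 0 := fun h ↦ hω.ne_zero (by omega) (by simp [h])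
  have hω4 : IsPrimitiveRoot (ω ^ 4) n := by
    simpa only [← pow_mul] using hω.pow_of_coprime 2 (Nat.coprime_two_left.2 hodd)
  have hlast : ω ^ (4 * ((n + 1) / 2)) = ω ^ 2 := by
    obtain ⟨j, rfl⟩ := hodd
    rw [show 4 * ((2 * j + 1 + 1) / 2) = 2 * (2 * j + 1) + 2 by omega, pow_add, pow_mul,
      hω.pow_eq_one, one_mul]
  have hsum := sum_range_summand ω hω0 (hω.ne_one hn) ((n + 1) / 2)
    (hω4.qpochC_self_ne_zero (by omega))
  rwa [hlast, partialSumPoly, sub_self, zero_mul, mul_zero, zero_div] at hsum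
end
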